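/- arXiv:1708.08820 — 2 statements merged into one kernel-verified Lean document; each statement's English description precedes it below -/
import Mathlib

section
/- For B > 0 define the transition kernel K_B(θ, θ′) = exp(B cos(θ′ − θ)) / ∫_{−π}^{π} exp(B cos φ) dφ on (−π,π], and the transition operator (𝒦_B f)(θ) = ∫_{−π}^{π} K_B(θ, θ′) f(θ′) dθ′. Let f : ℝ → ℝ be 2π-periodic and twice continuously differentiable, and let (B_n) be positive reals with B_n / n → b ∈ (0,∞). Then for every θ ∈ ℝ, n · ( (𝒦_{B_n} f)(θ) − f(θ) ) → f″(θ) / (2b) as n → ∞. -/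
/-!
Rotating by `θ` (using periodicity), `(𝒦_B f - f)(θ)` is the average of `f (θ + φ) - f θ`
against the weight `exp (B cos φ) / Z_B`. Subtract the Taylor polynomial
`f' θ φ + f'' θ / 2 · φ sin φ`, which differs from the usual one by `o(φ²)`: the linear term
integrates to zero by symmetry, and integrating `φ sin φ` by parts against `exp (B cos φ)` gives
`(Z_B - 2π e^{-B}) / B`. Hence `B (𝒦_B f - f)(θ) = f'' θ / 2 + o(1)`, provided the remainder
`r = o(φ²)` satisfies `B ∫ exp (B cos φ) r / Z_B → 0`. This is a Laplace-type estimate: near `0`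
the remainder is small compared with `φ sin φ`, and away from `0` the weight is exponentially
smaller than `Z_B`. Finally `n ~ B_n / b`.
-/

open MeasureTheory Real Filter intervalIntegral

/-- The one-step transition kernel of the XY chain at inverse temperature `B`:
`K_B(θ, θ') = exp(B cos(θ' - θ)) / ∫_{-π}^{π} exp(B cos φ) dφ`. -/
noncomputable def xyKernel (B θ θ' : ℝ) : ℝ :=
  Real.exp (B * Real.cos (θ' - θ)) / ∫ φ in (-π)..π, Real.exp (B * Real.cos φ)

/-- The transition operator `(𝒦_B f)(θ) = ∫_{-π}^{π} K_B(θ, θ') f(θ') dθ'`. -/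
noncomputable def xyTransOp (B : ℝ) (f : ℝ → ℝ) (θ : ℝ) : ℝ :=
  ∫ θ' in (-π)..π, xyKernel B θ θ' * f θ'

open Asymptotics Set Topology

noncomputable def xyPartition (B : ℝ) : ℝ := ∫ φ in (-π)..π, exp (B * cos φ)

lemma xyPartition_pos (B : ℝ) : 0 < xyPartition B :=
  intervalIntegral_pos_of_pos (Continuous.intervalIntegrable (by fun_prop) _ _)
    (fun _ => exp_pos _) (by linarith [pi_pos])

lemma cos_le_cos_of_abs_le_abs {x y : ℝ} (hxy : |x| ≤ |y|) (hy : |y| ≤ π) :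
    cos y ≤ cos x := by
  rw [← cos_abs x, ← cos_abs y]
  exact cos_le_cos_of_nonneg_of_le_pi (abs_nonneg x) hy hxy

lemma mul_sin_nonneg_of_abs_le_pi {x : ℝ} (hx : |x| ≤ π) : 0 ≤ x * sin x := by
  have h : x * sin x = |x| * sin |x| := by
    rcases le_total 0 x with h | h
    · rw [abs_of_nonneg h]
    · rw [abs_of_nonpos h, sin_neg]; ring
  rw [h]
  exact mul_nonneg (abs_nonneg x) (sin_nonneg_of_nonneg_of_le_pi (abs_nonneg x) hx)

lemma isEquivalent_mul_sin : (fun x : ℝ => x * sin x) ~[𝓝 0] fun x => x ^ 2 := by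
  have h : (fun x : ℝ => x ^ 2) = id * id := by ext; simp [sq]
  rw [h]
  exact IsEquivalent.refl.mul isEquivalent_sin

lemma taylor_two_isLittleO {f : ℝ → ℝ} (hf : ContDiff ℝ 2 f) (θ : ℝ) :
    (fun φ => f (θ + φ) - (f θ + deriv f θ * φ + iteratedDeriv 2 f θ / 2 * φ ^ 2))
      =o[𝓝 0] fun φ => φ ^ 2 := by
  have hshift : Tendsto (fun φ : ℝ => θ + φ) (𝓝 0) (𝓝 θ) := by
    simpa using (continuous_const_add θ).tendsto 0
  refine ((taylor_isLittleO_univ hf).comp_tendsto hshift).congr (fun φ => ?_) (fun φ => ?_)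
  · simp [taylor_within_apply, iteratedDerivWithin_univ]
    ring
  · simp

lemma integral_exp_mul_cos_mul_self (B : ℝ) : ∫ φ in (-π)..π, exp (B * cos φ) * φ = 0 := by
  have h := integral_comp_neg (a := -π) (b := π) fun φ => exp (B * cos φ) * φ
  simp only [cos_neg, neg_neg, mul_neg, intervalIntegral.integral_neg] at h
  linarith

lemma integral_exp_mul_cos_mul_mul_sin {B : ℝ} (hB : B ≠ 0) :
    ∫ φ in (-π)..π, exp (B * cos φ) * (φ * sin φ) = (xyPartition B - 2 * π * exp (-B)) / B := by
  have hderiv : ∀ x ∈ uIcc (-π) π, HasDerivAt (fun φ => φ * exp (B * cos φ))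
      (exp (B * cos x) - B * (exp (B * cos x) * (x * sin x))) x := by
    intro x _
    refine ((hasDerivAt_id x).mul ((hasDerivAt_cos x).const_mul B).exp).congr_deriv ?_
    simp only [id]
    ring
  have hftc :=
    integral_eq_sub_of_hasDerivAt hderiv (Continuous.intervalIntegrable (by fun_prop) _ _)
  rw [intervalIntegral.integral_sub (Continuous.intervalIntegrable (by fun_prop) _ _)
    (Continuous.intervalIntegrable (by fun_prop) _ _), intervalIntegral.integral_const_mul]
    at hftc
  simp only [cos_neg, cos_pi, mul_neg_one] at hftc
  rw [eq_div_iff hB, xyPartition]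
  linarith

lemma two_mul_mul_exp_mul_cos_le_xyPartition {B η : ℝ} (hB : 0 ≤ B) (hη : 0 ≤ η)
    (hηπ : η ≤ π) :
    2 * η * exp (B * cos η) ≤ xyPartition B := by
  have hconst : ∫ _ in (-η)..η, exp (B * cos η) = 2 * η * exp (B * cos η) := by
    rw [intervalIntegral.integral_const, smul_eq_mul]; ring
  calc 2 * η * exp (B * cos η) = ∫ _ in (-η)..η, exp (B * cos η) := hconst.symm
    _ ≤ ∫ φ in (-η)..η, exp (B * cos φ) := by
      refine intervalIntegral.integral_mono_on (by linarith) intervalIntegrable_const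
        (Continuous.intervalIntegrable (by fun_prop) _ _) fun φ hφ => ?_
      have hcos : cos η ≤ cos φ :=
        cos_le_cos_of_abs_le_abs (by rw [abs_of_nonneg hη]; exact abs_le.2 hφ)
          (by rwa [abs_of_nonneg hη])
      gcongr
    _ ≤ xyPartition B :=
      intervalIntegral.integral_mono_interval (by linarith) (by linarith) hηπ
        (Eventually.of_forall fun φ => (exp_pos _).le)
        (Continuous.intervalIntegrable (by fun_prop) _ _)

lemma tendsto_mul_exp_mul_cos_div_xyPartition {δ : ℝ} (hδ : 0 < δ) (hδπ : δ ≤ π) :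
    Tendsto (fun B => B * exp (B * cos δ) / xyPartition B) atTop (𝓝 0) := by
  set κ := cos (δ / 2) - cos δ
  have hκ : 0 < κ := sub_pos.2 (cos_lt_cos_of_nonneg_of_le_pi (by linarith) hδπ (by linarith))
  have hdecay : Tendsto (fun B => δ⁻¹ * κ⁻¹ * ((κ * B) ^ 1 * exp (-(κ * B)))) atTop (𝓝 0) := by
    simpa using ((tendsto_pow_mul_exp_neg_atTop_nhds_zero 1).comp
      (tendsto_id.const_mul_atTop hκ)).const_mul (δ⁻¹ * κ⁻¹)
  have hZ : ∀ B, 0 ≤ B → δ * exp (B * cos (δ / 2)) ≤ xyPartition B := fun B hB => by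
    simpa [mul_div_cancel₀] using
      two_mul_mul_exp_mul_cos_le_xyPartition hB (by linarith : 0 ≤ δ / 2) (by linarith)
  refine squeeze_zero' ?_ ?_ hdecay
  · filter_upwards [eventually_ge_atTop 0] with B hB
    have := xyPartition_pos B
    positivity
  · filter_upwards [eventually_ge_atTop 0] with B hB
    calc B * exp (B * cos δ) / xyPartition B
        ≤ B * exp (B * cos δ) / (δ * exp (B * cos (δ / 2))) :=
          div_le_div_of_nonneg_left (by positivity) (by positivity) (hZ B hB)
      _ = δ⁻¹ * κ⁻¹ * ((κ * B) ^ 1 * exp (-(κ * B))) := by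
          rw [show -(κ * B) = B * cos δ - B * cos (δ / 2) by ring, exp_sub]
          field_simp

lemma xyTransOp_eq_integral_div {f : ℝ → ℝ} (hper : Function.Periodic f (2 * π)) (B θ : ℝ) :
    xyTransOp B f θ = (∫ φ in (-π)..π, exp (B * cos φ) * f (θ + φ)) / xyPartition B := by
  have hg : Function.Periodic (fun φ => exp (B * cos φ) * f (θ + φ)) (2 * π) := fun φ => by
    simp only [cos_add_two_pi, ← add_assoc, hper (θ + φ)]
  have hshift := hg.intervalIntegral_add_eq (-π - θ) (-π)
  rw [show -π - θ + 2 * π = π - θ by ring, show -π + 2 * π = π by ring,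
    ← intervalIntegral.integral_comp_sub_right] at hshift
  simp only [add_sub_cancel] at hshift
  simp only [xyTransOp, xyKernel, div_mul_eq_mul_div, intervalIntegral.integral_div, hshift]
  rfl

lemma mul_xyTransOp_sub_eq {f : ℝ → ℝ} (hper : Function.Periodic f (2 * π)) (hf : Continuous f)
    {B : ℝ} (hB : B ≠ 0) (θ a c : ℝ) :
    B * (xyTransOp B f θ - f θ) = c * (1 - 2 * π * exp (-B) / xyPartition B) +
      B * (∫ φ in (-π)..π, exp (B * cos φ) * (f (θ + φ) - f θ - a * φ - c * (φ * sin φ))) /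
        xyPartition B := by
  have hsplit : ∫ φ in (-π)..π, exp (B * cos φ) * (f (θ + φ) - f θ - a * φ - c * (φ * sin φ)) =
      (∫ φ in (-π)..π, exp (B * cos φ) * f (θ + φ)) - xyPartition B * f θ
        - a * (∫ φ in (-π)..π, exp (B * cos φ) * φ)
        - c * ∫ φ in (-π)..π, exp (B * cos φ) * (φ * sin φ) := by
    simp only [mul_sub, ← intervalIntegral.integral_const_mul, xyPartition,
      ← intervalIntegral.integral_mul_const]
    rw [intervalIntegral.integral_sub, intervalIntegral.integral_sub,
      intervalIntegral.integral_sub]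
    · simp only [mul_left_comm (exp _)]
    all_goals exact Continuous.intervalIntegrable (by fun_prop) _ _
  rw [hsplit, integral_exp_mul_cos_mul_self, integral_exp_mul_cos_mul_mul_sin hB,
    xyTransOp_eq_integral_div hper]
  have := (xyPartition_pos B).ne'
  field_simp
  ring

lemma abs_exp_mul_cos_mul_le {r : ℝ → ℝ} {B δ ε M φ : ℝ} (hB : 0 ≤ B) (hδ : 0 ≤ δ)
    (hε : 0 ≤ ε) (hsmall : ∀ φ, |φ| < δ → |r φ| ≤ ε * |φ * sin φ|)
    (hM : ∀ φ ∈ Icc (-π) π, |r φ| ≤ M) (hφ : φ ∈ Icc (-π) π) :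
    |exp (B * cos φ) * r φ| ≤ ε * (exp (B * cos φ) * (φ * sin φ)) + M * exp (B * cos δ) := by
  have hφπ : |φ| ≤ π := abs_le.2 hφ
  have hsin := mul_sin_nonneg_of_abs_le_pi hφπ
  have hnear : 0 ≤ ε * (exp (B * cos φ) * (φ * sin φ)) := by positivity
  have hfar : 0 ≤ M * exp (B * cos δ) := mul_nonneg ((abs_nonneg _).trans (hM φ hφ)) (exp_pos _).le
  rw [abs_mul, abs_of_pos (exp_pos _)]
  rcases lt_or_ge |φ| δ with hφδ | hφδ
  · have hrφ := hsmall φ hφδ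
    rw [abs_of_nonneg hsin] at hrφ
    have := mul_le_mul_of_nonneg_left hrφ (exp_pos (B * cos φ)).le
    linarith [mul_left_comm (exp (B * cos φ)) ε (φ * sin φ)]
  · have hcos : cos φ ≤ cos δ := cos_le_cos_of_abs_le_abs (by rwa [abs_of_nonneg hδ]) hφπ
    have hexp : exp (B * cos φ) ≤ exp (B * cos δ) := by gcongr
    have := mul_le_mul hexp (hM φ hφ) (abs_nonneg _) (exp_pos _).le
    linarith [mul_comm M (exp (B * cos δ))]

lemma abs_integral_exp_mul_cos_mul_le {r : ℝ → ℝ} (hr : Continuous r) {B δ ε M : ℝ} (hB : 0 < B)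
    (hδ : 0 ≤ δ) (hε : 0 ≤ ε) (hsmall : ∀ φ, |φ| < δ → |r φ| ≤ ε * |φ * sin φ|)
    (hM : ∀ φ ∈ Icc (-π) π, |r φ| ≤ M) :
    |∫ φ in (-π)..π, exp (B * cos φ) * r φ| ≤
      ε * (xyPartition B / B) + 2 * π * M * exp (B * cos δ) := by
  have hπ := pi_pos
  have hsub : (xyPartition B - 2 * π * exp (-B)) / B ≤ xyPartition B / B := by
    gcongr
    exact sub_le_self _ (by positivity)
  calc |∫ φ in (-π)..π, exp (B * cos φ) * r φ|
      ≤ ∫ φ in (-π)..π, |exp (B * cos φ) * r φ| :=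
        intervalIntegral.abs_integral_le_integral_abs (by linarith)
    _ ≤ ∫ φ in (-π)..π, (ε * (exp (B * cos φ) * (φ * sin φ)) + M * exp (B * cos δ)) :=
        intervalIntegral.integral_mono_on (by linarith)
          (Continuous.intervalIntegrable (by fun_prop) _ _)
          (Continuous.intervalIntegrable (by fun_prop) _ _)
          fun φ hφ => abs_exp_mul_cos_mul_le hB.le hδ hε hsmall hM hφ
    _ = ε * ((xyPartition B - 2 * π * exp (-B)) / B) + 2 * π * M * exp (B * cos δ) := by
        rw [intervalIntegral.integral_add (Continuous.intervalIntegrable (by fun_prop) _ _)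
          intervalIntegrable_const, intervalIntegral.integral_const_mul,
          integral_exp_mul_cos_mul_mul_sin hB.ne', intervalIntegral.integral_const, smul_eq_mul]
        ring
    _ ≤ ε * (xyPartition B / B) + 2 * π * M * exp (B * cos δ) := by gcongr

lemma tendsto_mul_integral_exp_mul_cos_div_xyPartition {r : ℝ → ℝ} (hr : Continuous r)
    (hr0 : r =o[𝓝 0] fun φ => φ ^ 2) :
    Tendsto (fun B => B * (∫ φ in (-π)..π, exp (B * cos φ) * r φ) / xyPartition B)
      atTop (𝓝 0) := by
  have hr1 : r =o[𝓝 0] fun φ => φ * sin φ := hr0.trans_isBigO isEquivalent_mul_sin.isBigO_symm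
  obtain ⟨M, hM⟩ :=
    (isCompact_Icc (a := -π) (b := π)).exists_bound_of_continuousOn hr.continuousOn
  rw [Metric.tendsto_nhds]
  intro ε hε
  obtain ⟨δ₀, hδ₀, hnear⟩ := Metric.eventually_nhds_iff.1 (hr1.def (half_pos hε))
  set δ := min δ₀ π
  have hδ : 0 < δ := lt_min hδ₀ pi_pos
  have hsmall : ∀ φ, |φ| < δ → |r φ| ≤ ε / 2 * |φ * sin φ| := fun φ hφ => by
    simpa using hnear (show dist φ 0 < δ₀ by simpa using hφ.trans_le (min_le_left δ₀ π))
  have htail := (tendsto_mul_exp_mul_cos_div_xyPartition hδ (min_le_right δ₀ π)).const_mul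
    (2 * π * M)
  rw [mul_zero] at htail
  filter_upwards [eventually_gt_atTop 0, htail.eventually (gt_mem_nhds (half_pos hε))]
    with B hB htailB
  have hZ := xyPartition_pos B
  rw [dist_zero_right, norm_div, norm_mul, Real.norm_eq_abs, Real.norm_eq_abs, Real.norm_eq_abs,
    abs_of_pos hB, abs_of_pos hZ]
  calc B * |∫ φ in (-π)..π, exp (B * cos φ) * r φ| / xyPartition B
      ≤ B * (ε / 2 * (xyPartition B / B) + 2 * π * M * exp (B * cos δ)) / xyPartition B := by
        gcongr
        exact abs_integral_exp_mul_cos_mul_le hr hB hδ.le (half_pos hε).le hsmall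
          fun φ hφ => by simpa using hM φ hφ
    _ = ε / 2 + 2 * π * M * (B * exp (B * cos δ) / xyPartition B) := by field_simp
    _ < ε / 2 + ε / 2 := by gcongr
    _ = ε := add_halves ε

lemma tendsto_mul_xyTransOp_sub {f : ℝ → ℝ} (hper : Function.Periodic f (2 * π))
    (hf : ContDiff ℝ 2 f) (θ : ℝ) :
    Tendsto (fun B => B * (xyTransOp B f θ - f θ)) atTop (𝓝 (iteratedDeriv 2 f θ / 2)) := by
  set c := iteratedDeriv 2 f θ / 2
  set r : ℝ → ℝ := fun φ => f (θ + φ) - f θ - deriv f θ * φ - c * (φ * sin φ)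
  have hfc : Continuous f := hf.continuous
  have hr : r =o[𝓝 0] fun φ => φ ^ 2 := by
    refine ((taylor_two_isLittleO hf θ).sub
      (isEquivalent_mul_sin.isLittleO.const_mul_left c)).congr_left fun φ => ?_
    simp only [r, Pi.sub_apply]
    ring
  have hexp : Tendsto (fun B => exp (-B) / xyPartition B) atTop (𝓝 0) := by
    have h := (tendsto_mul_exp_mul_cos_div_xyPartition pi_pos le_rfl).mul tendsto_inv_atTop_zero
    rw [mul_zero] at h
    refine h.congr' ?_
    filter_upwards [eventually_ne_atTop 0] with B hB
    rw [cos_pi]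
    field_simp
  have hlim := (((hexp.const_mul (2 * π)).const_sub 1).const_mul c).add
    (tendsto_mul_integral_exp_mul_cos_div_xyPartition (by fun_prop) hr)
  rw [mul_zero, sub_zero, mul_one, add_zero] at hlim
  refine hlim.congr' ?_
  filter_upwards [eventually_ne_atTop 0] with B hB
  rw [mul_xyTransOp_sub_eq hper hfc hB θ (deriv f θ) c, mul_div_assoc, mul_div_assoc]

theorem xy_generator_convergence_general (f : ℝ → ℝ)
    (hper : Function.Periodic f (2 * π)) (hf : ContDiff ℝ 2 f)
    (B : ℕ → ℝ) (b : ℝ) (hb : 0 < b)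
    (hlim : Tendsto (fun n => B n / n) atTop (nhds b)) :
    ∀ θ : ℝ, Tendsto (fun n : ℕ => (n : ℝ) * (xyTransOp (B n) f θ - f θ)) atTop
      (nhds (iteratedDeriv 2 f θ / (2 * b))) := by
  intro θ
  have hBtop : Tendsto B atTop atTop := by
    refine (Tendsto.pos_mul_atTop hb hlim tendsto_natCast_atTop_atTop).congr' ?_
    filter_upwards [eventually_ne_atTop 0] with n hn
    exact div_mul_cancel₀ _ (Nat.cast_ne_zero.2 hn)
  have hratio : Tendsto (fun n : ℕ => (n : ℝ) / B n) atTop (𝓝 b⁻¹) := by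
    simpa only [inv_div] using hlim.inv₀ hb.ne'
  have h := hratio.mul ((tendsto_mul_xyTransOp_sub hper hf θ).comp hBtop)
  rw [inv_mul_eq_div, div_div] at h
  refine h.congr' ?_
  filter_upwards [hBtop.eventually_ne_atTop 0] with n hn
  simp only [Function.comp_apply]
  field_simp

/-- Generator convergence for the 1D XY chain: if `f` is `2π`-periodic and twice
continuously differentiable and `B_n / n → b ∈ (0, ∞)`, then
`n (𝒦_{B_n} f - f)(θ) → f''(θ)/(2b)` for every `θ`. -/
theorem xy_generator_convergence (f : ℝ → ℝ)
    (hper : Function.Periodic f (2 * π)) (hf : ContDiff ℝ 2 f)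
    (B : ℕ → ℝ) (hB : ∀ n, 0 < B n) (b : ℝ) (hb : 0 < b)
    (hlim : Tendsto (fun n => B n / n) atTop (nhds b)) :
    ∀ θ : ℝ, Tendsto (fun n : ℕ => (n : ℝ) * (xyTransOp (B n) f θ - f θ)) atTop
      (nhds (iteratedDeriv 2 f θ / (2 * b))) :=
  xy_generator_convergence_general f hper hf B b hb hlim
end

section
/- Let W be a nonnegative real random variable and suppose there exist γ > 0 and c ∈ ℝ such that log E[W^{2k}] = γ k log k + c k + o(k) as k → ∞ (in particular all even moments are finite). Then there exists a constant c* ∈ (0, ∞) such that log P(W > t) = −c* t^{2/γ} + o(t^{2/γ}) as t → ∞. -/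
/-!
Put `θ = t ^ (2 / γ)` and `κ = exp (-(1 + c / γ))`, so that
`log E[W^(2k)] = γ k (log (k / κ) - 1) + o(k)` and `P(W > t) = P(W > θ ^ (γ / 2))`.

Chebyshev's inequality with `k ≈ κ θ` gives `P(W > t) ≤ E[W^(2k)] t^(-2k) = exp (-γ κ θ + o(θ))`.

For the lower bound fix `κ < x < ν`, take `k ≈ x θ` and `b = (ν θ / κ) ^ (γ / 2) > t`, and split
`E[W^(2k)]` over `W ≤ t`, `t < W ≤ b` and `b < W`. Bounding `W^(2k)` by `t^(2k - 2n) W^(2n)` on the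
first range (`n ≈ κ θ`) and by `W^(2K) / b^(2K - 2k)` on the last (`K ≈ ν θ`), both contribute at
most `E[W^(2k)] / 4`, because `x ↦ γ x (log (x / μ) - 1)` is strictly minimal at `x = μ` (used
with `μ = κ` and `μ = ν`). Hence
`P(W > t) ≥ E[W^(2k)] / (2 b^(2k)) = exp (γ x (log (x / ν) - 1) θ + o(θ)) ≥ exp (-γ ν θ + o(θ))`,
and `ν` can be taken arbitrarily close to `κ`.
-/

open MeasureTheory Filter Asymptotics

section

open Real Topology

/-- `θ * logRate γ ν x` is the leading term of `log E[W^(2k)] - γ k log (ν θ / κ)` for `k ≈ x θ`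
(see `tendsto_sub_mul_log_div`); as a function of `x` it is minimal at `x = ν`. -/
noncomputable def logRate (γ ν x : ℝ) : ℝ := γ * x * (log (x / ν) - 1)

theorem logRate_self (γ : ℝ) {ν : ℝ} (hν : ν ≠ 0) : logRate γ ν ν = -(γ * ν) := by
  simp [logRate, div_self hν]

theorem logRate_self_lt {γ ν x : ℝ} (hγ : 0 < γ) (hν : 0 < ν) (hx : 0 < x) (hxν : x ≠ ν) :
    logRate γ ν ν < logRate γ ν x := by
  have hlog : log (ν / x) < ν / x - 1 :=
    log_lt_sub_one_of_pos (by positivity) (by rwa [Ne, div_eq_one_iff_eq hx.ne', eq_comm])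
  have hinv : log (x / ν) = -log (ν / x) := by rw [← log_inv, inv_div]
  have hxlog : x * log (ν / x) < ν - x := by
    calc x * log (ν / x) < x * (ν / x - 1) := mul_lt_mul_of_pos_left hlog hx
      _ = ν - x := by field_simp
  rw [logRate_self γ hν.ne', logRate, hinv]
  nlinarith [mul_lt_mul_of_pos_left hxlog hγ]

theorem logRate_self_le {γ ν x : ℝ} (hγ : 0 < γ) (hν : 0 < ν) (hx : 0 < x) :
    logRate γ ν ν ≤ logRate γ ν x := by
  rcases eq_or_ne x ν with rfl | hxν
  · rfl
  · exact (logRate_self_lt hγ hν hx hxν).le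

theorem logRate_exp_neg_one_add_div {γ : ℝ} (hγ : γ ≠ 0) (c y : ℝ) :
    logRate γ (exp (-(1 + c / γ))) y = γ * y * log y + c * y := by
  rcases eq_or_ne y 0 with rfl | hy
  · simp [logRate]
  · rw [logRate, log_div hy (exp_pos _).ne', log_exp]
    field_simp
    ring

theorem continuousAt_logRate (γ : ℝ) {ν x : ℝ} (hν : ν ≠ 0) (hx : x ≠ 0) :
    ContinuousAt (logRate γ ν) x := by
  unfold logRate
  fun_prop (disch := positivity)

section LogMoments

variable {L : ℕ → ℝ} {γ κ : ℝ}

theorem eventually_pos_of_isLittleO_sub_logRate (hγ : 0 < γ) (hκ : 0 < κ)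
    (hL : (fun n : ℕ => L n - logRate γ κ n) =o[atTop] (fun n : ℕ => (n : ℝ))) :
    ∀ᶠ n in atTop, 0 < L n := by
  have hrate : Tendsto (fun n : ℕ => γ * (log (n / κ) - 1)) atTop atTop :=
    (tendsto_atTop_add_const_right _ (-1) (tendsto_log_atTop.comp
      ((tendsto_natCast_atTop_atTop).atTop_div_const hκ))).const_mul_atTop hγ
  have hdiv : Tendsto (fun n : ℕ => L n / n) atTop atTop := by
    refine (hL.tendsto_div_nhds_zero.add_atTop hrate).congr' ?_
    filter_upwards [eventually_ne_atTop 0] with n hn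
    have hn' : (n : ℝ) ≠ 0 := Nat.cast_ne_zero.2 hn
    simp only [logRate]
    field_simp
    ring
  filter_upwards [hdiv.eventually_gt_atTop 0, eventually_gt_atTop 0] with n hn hn0
  exact (div_pos_iff_of_pos_right (Nat.cast_pos.2 hn0)).1 hn

theorem tendsto_sub_mul_log_div (hκ : 0 < κ)
    (hL : (fun n : ℕ => L n - logRate γ κ n) =o[atTop] (fun n : ℕ => (n : ℝ)))
    {x r : ℝ} (hx : 0 < x) (hr : 0 < r) :
    Tendsto (fun θ : ℝ => (L ⌈x * θ⌉₊ - γ * ⌈x * θ⌉₊ * log (r * θ)) / θ) atTop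
      (𝓝 (logRate γ (κ * r) x)) := by
  have hratio : Tendsto (fun θ : ℝ => (⌈x * θ⌉₊ : ℝ) / θ) atTop (𝓝 x) :=
    tendsto_nat_ceil_mul_div_atTop hx.le
  have hceil : Tendsto (fun θ : ℝ => ⌈x * θ⌉₊) atTop atTop :=
    tendsto_nat_ceil_atTop.comp (tendsto_id.const_mul_atTop hx)
  have hlim := ((hL.tendsto_div_nhds_zero.comp hceil).mul hratio).add
    ((continuousAt_logRate γ (ν := κ * r) (by positivity) hx.ne').tendsto.comp hratio)
  rw [zero_mul, zero_add] at hlim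
  refine hlim.congr' ?_
  filter_upwards [eventually_gt_atTop 0] with θ hθ
  have hk : (0 : ℝ) < ⌈x * θ⌉₊ := Nat.cast_pos.2 (Nat.ceil_pos.2 (by positivity))
  have hlog : log (⌈x * θ⌉₊ / θ / (κ * r)) = log (⌈x * θ⌉₊ / κ) - log (r * θ) := by
    rw [← log_div (by positivity) (by positivity)]
    congr 1
    field_simp
  simp only [Function.comp, logRate, hlog]
  field_simp
  ring

theorem tendsto_mul_div_self_atTop (a : ℝ) : Tendsto (fun θ : ℝ => a * θ / θ) atTop (𝓝 a) :=
  tendsto_const_nhds.congr' <| by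
    filter_upwards [eventually_ne_atTop 0] with θ hθ using (mul_div_cancel_right₀ a hθ).symm

theorem eventually_add_le_of_tendsto_div {X Y : ℝ → ℝ} {x y : ℝ}
    (hX : Tendsto (fun θ => X θ / θ) atTop (𝓝 x)) (hY : Tendsto (fun θ => Y θ / θ) atTop (𝓝 y))
    (hxy : x < y) (C : ℝ) : ∀ᶠ θ in atTop, X θ + C ≤ Y θ := by
  have h := tendsto_id.atTop_mul_pos (sub_pos.2 hxy) (hY.sub hX)
  filter_upwards [h.eventually_ge_atTop C, eventually_ne_atTop 0] with θ hθ hθ0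
  rw [id, ← sub_div, mul_div_cancel₀ _ hθ0] at hθ
  linarith

theorem eventually_log_moment_dominates (hγ : 0 < γ) (hκ : 0 < κ)
    (hL : (fun n : ℕ => L n - logRate γ κ n) =o[atTop] (fun n : ℕ => (n : ℝ)))
    {x ν η : ℝ} (hκx : κ < x) (hxν : x < ν) (hη : 0 < η) :
    ∀ᶠ θ in atTop, 0 < L ⌈x * θ⌉₊ ∧
      L ⌈κ * θ⌉₊ - γ * ⌈κ * θ⌉₊ * log θ + log 4 ≤ L ⌈x * θ⌉₊ - γ * ⌈x * θ⌉₊ * log θ ∧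
      L ⌈ν * θ⌉₊ - γ * ⌈ν * θ⌉₊ * log (ν / κ * θ) + log 4 ≤
        L ⌈x * θ⌉₊ - γ * ⌈x * θ⌉₊ * log (ν / κ * θ) ∧
      (logRate γ ν x - η) * θ + log 2 ≤ L ⌈x * θ⌉₊ - γ * ⌈x * θ⌉₊ * log (ν / κ * θ) := by
  have hx : 0 < x := hκ.trans hκx
  have hν : 0 < ν := hx.trans hxν
  have hμ : 0 < ν / κ := div_pos hν hκ
  have hlow := tendsto_sub_mul_log_div hκ hL hκ one_pos
  have hmid := tendsto_sub_mul_log_div hκ hL hx one_pos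
  have hmid' := tendsto_sub_mul_log_div hκ hL hx hμ
  have hhigh := tendsto_sub_mul_log_div hκ hL hν hμ
  rw [mul_div_cancel₀ ν hκ.ne'] at hmid' hhigh
  simp only [mul_one, one_mul] at hlow hmid
  filter_upwards [(tendsto_nat_ceil_atTop.comp (tendsto_id.const_mul_atTop hx)).eventually
      (eventually_pos_of_isLittleO_sub_logRate hγ hκ hL),
    eventually_add_le_of_tendsto_div hlow hmid (logRate_self_lt hγ hκ hx hκx.ne') (log 4),
    eventually_add_le_of_tendsto_div hhigh hmid' (logRate_self_lt hγ hν hx hxν.ne) (log 4),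
    eventually_add_le_of_tendsto_div (tendsto_mul_div_self_atTop (logRate γ ν x - η)) hmid'
      (by linarith) (log 2)] with θ h₁ h₂ h₃ h₄
  exact ⟨h₁, h₂, h₃, h₄⟩

end LogMoments

theorem rpow_div_two_pow_two_mul {θ : ℝ} (hθ : 0 < θ) (γ : ℝ) (n : ℕ) :
    (θ ^ (γ / 2)) ^ (2 * n) = exp (γ * n * log θ) := by
  rw [← rpow_natCast, ← rpow_mul hθ.le, rpow_def_of_pos hθ]
  push_cast
  ring_nf

theorem pow_le_mul_pow_add_ite_add_div {w a b : ℝ} (hw : 0 ≤ w) (ha : 0 ≤ a) (hb : 0 < b)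
    {n k K : ℕ} (hnk : n ≤ k) (hkK : k ≤ K) :
    w ^ k ≤ a ^ (k - n) * w ^ n + (if a < w then b ^ k else 0) + w ^ K / b ^ (K - k) := by
  have hfar : 0 ≤ w ^ K / b ^ (K - k) := by positivity
  rcases le_or_gt w a with hwa | haw
  · have : w ^ k ≤ a ^ (k - n) * w ^ n := by
      rw [← Nat.sub_add_cancel hnk, pow_add, Nat.add_sub_cancel]
      gcongr
    rw [if_neg hwa.not_gt]
    linarith
  rcases le_or_gt w b with hwb | hbw
  · have : w ^ k ≤ b ^ k := by gcongr
    rw [if_pos haw]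
    nlinarith [mul_nonneg (pow_nonneg ha (k - n)) (pow_nonneg hw n)]
  · have : w ^ k ≤ w ^ K / b ^ (K - k) := by
      rw [le_div_iff₀ (by positivity), ← Nat.add_sub_cancel' hkK, pow_add,
        Nat.add_sub_cancel_left]
      gcongr
    rw [if_pos haw]
    nlinarith [mul_nonneg (pow_nonneg ha (k - n)) (pow_nonneg hw n), pow_nonneg hb.le k]

theorem exp_mul_le_div_of_log_add_le {y m z C : ℝ} (hm : 0 < m) (hC : 0 < C)
    (h : log y + z + log C ≤ log m) : exp z * y ≤ m / C := by
  calc exp z * y ≤ exp z * exp (log y) := by gcongr; exact le_exp_log y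
    _ = exp (log y + z + log C) / C := by rw [exp_add, exp_log hC, exp_add]; field_simp
    _ ≤ m / C := by gcongr; exact (exp_le_exp.2 h).trans_eq (exp_log hm)

theorem isLittleO_log_add_mul_of_exp_bounds {f : ℝ → ℝ} {a : ℝ}
    (hlow : ∀ ε > 0, ∀ᶠ θ in atTop, exp ((-a - ε) * θ) ≤ f θ)
    (hup : ∀ ε > 0, ∀ᶠ θ in atTop, f θ ≤ exp ((-a + ε) * θ)) :
    (fun θ => log (f θ) + a * θ) =o[atTop] (fun θ => θ) := by
  refine isLittleO_iff.2 fun ε hε => ?_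
  filter_upwards [hlow ε hε, hup ε hε, eventually_ge_atTop 0] with θ hl hu hθ
  have hf : 0 < f θ := (exp_pos _).trans_le hl
  have hl' := (le_log_iff_exp_le hf).2 hl
  have hu' := (log_le_iff_le_exp hf).2 hu
  rw [norm_eq_abs, norm_of_nonneg hθ, abs_le]
  constructor <;> nlinarith

section Tail

variable {Ω : Type*} [MeasurableSpace Ω] {P : Measure Ω} [IsFiniteMeasure P] {W : Ω → ℝ}
  {γ κ : ℝ}

theorem measureReal_lt_mul_pow_le_integral (hWnn : ∀ ω, 0 ≤ W ω) {n : ℕ}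
    (hint : Integrable (fun ω => W ω ^ n) P) {a : ℝ} (ha : 0 ≤ a) :
    P.real {ω | a < W ω} * a ^ n ≤ ∫ ω, W ω ^ n ∂P := by
  calc P.real {ω | a < W ω} * a ^ n ≤ a ^ n * P.real {ω | a ^ n ≤ W ω ^ n} := by
        rw [mul_comm]
        exact mul_le_mul_of_nonneg_left
          (measureReal_mono fun ω (hω : a < W ω) => pow_le_pow_left₀ ha hω.le n) (by positivity)
    _ ≤ ∫ ω, W ω ^ n ∂P :=
        mul_meas_ge_le_integral_of_nonneg (ae_of_all _ fun ω => pow_nonneg (hWnn ω) n) hint _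

theorem integral_pow_le_mul_integral_add_mul_measureReal_add (hW : Measurable W)
    (hWnn : ∀ ω, 0 ≤ W ω) {n k K : ℕ}
    (hn : Integrable (fun ω => W ω ^ n) P) (hK : Integrable (fun ω => W ω ^ K) P)
    (hnk : n ≤ k) (hkK : k ≤ K) {a b : ℝ} (ha : 0 ≤ a) (hb : 0 < b) :
    ∫ ω, W ω ^ k ∂P ≤ a ^ (k - n) * ∫ ω, W ω ^ n ∂P + b ^ k * P.real {ω | a < W ω}
      + (∫ ω, W ω ^ K ∂P) / b ^ (K - k) := by
  have hmeas : MeasurableSet {ω | a < W ω} := measurableSet_lt measurable_const hW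
  have hind : Integrable ({ω | a < W ω}.indicator fun _ => b ^ k) P :=
    (integrable_const _).indicator hmeas
  have hnear : Integrable (fun ω => a ^ (k - n) * W ω ^ n) P := hn.const_mul _
  have hmid : Integrable (fun ω => a ^ (k - n) * W ω ^ n
      + {ω | a < W ω}.indicator (fun _ => b ^ k) ω) P := hnear.add hind
  calc ∫ ω, W ω ^ k ∂P
      ≤ ∫ ω, (a ^ (k - n) * W ω ^ n + {ω | a < W ω}.indicator (fun _ => b ^ k) ω
        + W ω ^ K / b ^ (K - k)) ∂P := by
        refine integral_mono_of_nonneg (ae_of_all _ fun ω => pow_nonneg (hWnn ω) k)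
          (hmid.add (hK.div_const _)) (ae_of_all _ fun ω => ?_)
        simpa [Set.indicator_apply] using pow_le_mul_pow_add_ite_add_div (hWnn ω) ha hb hnk hkK
    _ = _ := by
        rw [integral_add hmid (hK.div_const _), integral_add hnear hind,
          integral_const_mul, integral_indicator_const _ hmeas, integral_div, smul_eq_mul,
          mul_comm (P.real _)]

theorem eventually_tail_le_exp (hWnn : ∀ ω, 0 ≤ W ω) (hκ : 0 < κ)
    (hmomint : ∀ k : ℕ, Integrable (fun ω => W ω ^ (2 * k)) P)
    (hL : (fun n : ℕ => log (∫ ω, W ω ^ (2 * n) ∂P) - logRate γ κ n) =o[atTop]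
      (fun n : ℕ => (n : ℝ)))
    {ε : ℝ} (hε : 0 < ε) :
    ∀ᶠ θ in atTop, P.real {ω | θ ^ (γ / 2) < W ω} ≤ exp ((-(γ * κ) + ε) * θ) := by
  have hlim := tendsto_sub_mul_log_div hκ hL hκ one_pos
  simp only [mul_one, one_mul, logRate_self γ hκ.ne'] at hlim
  filter_upwards [eventually_add_le_of_tendsto_div hlim
      (tendsto_mul_div_self_atTop (-(γ * κ) + ε)) (by linarith) 0, eventually_gt_atTop 0]
    with θ hle hθ
  have hmarkov := measureReal_lt_mul_pow_le_integral hWnn (hmomint ⌈κ * θ⌉₊)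
    (rpow_nonneg hθ.le (γ / 2))
  rw [rpow_div_two_pow_two_mul hθ] at hmarkov
  calc P.real {ω | θ ^ (γ / 2) < W ω}
      ≤ (∫ ω, W ω ^ (2 * ⌈κ * θ⌉₊) ∂P) / exp (γ * ⌈κ * θ⌉₊ * log θ) :=
        (le_div_iff₀ (exp_pos _)).2 hmarkov
    _ ≤ exp (log (∫ ω, W ω ^ (2 * ⌈κ * θ⌉₊) ∂P) - γ * ⌈κ * θ⌉₊ * log θ) := by
        rw [exp_sub]
        gcongr
        exact le_exp_log _
    _ ≤ exp ((-(γ * κ) + ε) * θ) := exp_le_exp.2 (by linarith)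

theorem eventually_exp_logRate_le_tail (hW : Measurable W) (hWnn : ∀ ω, 0 ≤ W ω) (hγ : 0 < γ)
    (hκ : 0 < κ) (hmomint : ∀ k : ℕ, Integrable (fun ω => W ω ^ (2 * k)) P)
    (hL : (fun n : ℕ => log (∫ ω, W ω ^ (2 * n) ∂P) - logRate γ κ n) =o[atTop]
      (fun n : ℕ => (n : ℝ)))
    {x ν η : ℝ} (hκx : κ < x) (hxν : x < ν) (hη : 0 < η) :
    ∀ᶠ θ in atTop, exp ((logRate γ ν x - η) * θ) ≤ P.real {ω | θ ^ (γ / 2) < W ω} := by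
  have hμ : 0 < ν / κ := div_pos (hκ.trans (hκx.trans hxν)) hκ
  filter_upwards [eventually_log_moment_dominates hγ hκ hL hκx hxν hη, eventually_gt_atTop 0]
    with θ ⟨hlogpos, hnear, hfar, hmain⟩ hθ
  set n := ⌈κ * θ⌉₊
  set k := ⌈x * θ⌉₊
  set K := ⌈ν * θ⌉₊
  have hnk : n ≤ k := Nat.ceil_mono (by gcongr)
  have hkK : k ≤ K := Nat.ceil_mono (by gcongr)
  have hsplit := integral_pow_le_mul_integral_add_mul_measureReal_add hW hWnn (hmomint n)
    (hmomint K)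
    (Nat.mul_le_mul_left 2 hnk) (Nat.mul_le_mul_left 2 hkK) (rpow_nonneg hθ.le (γ / 2))
    (rpow_pos_of_pos (mul_pos hμ hθ) (γ / 2))
  rw [← Nat.mul_sub, ← Nat.mul_sub, rpow_div_two_pow_two_mul hθ,
    rpow_div_two_pow_two_mul (mul_pos hμ hθ), rpow_div_two_pow_two_mul (mul_pos hμ hθ),
    Nat.cast_sub hnk, Nat.cast_sub hkK] at hsplit
  set Mn := ∫ ω, W ω ^ (2 * n) ∂P
  set Mk := ∫ ω, W ω ^ (2 * k) ∂P
  set MK := ∫ ω, W ω ^ (2 * K) ∂P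
  have hMk : 0 < Mk :=
    one_pos.trans ((log_pos_iff (integral_nonneg fun ω => pow_nonneg (hWnn ω) _)).1 hlogpos)
  have hE₁ : exp (γ * (k - n) * log θ) * Mn ≤ Mk / 4 :=
    exp_mul_le_div_of_log_add_le hMk four_pos (by linarith)
  have hE₂ : MK / exp (γ * (K - k) * log (ν / κ * θ)) ≤ Mk / 4 := by
    rw [div_eq_inv_mul, ← exp_neg]
    exact exp_mul_le_div_of_log_add_le hMk four_pos (by linarith)
  calc exp ((logRate γ ν x - η) * θ)
      ≤ exp (log Mk - log 2 - γ * k * log (ν / κ * θ)) := exp_le_exp.2 (by linarith)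
    _ = Mk / 2 / exp (γ * k * log (ν / κ * θ)) := by
        rw [exp_sub, exp_sub, exp_log hMk, exp_log two_pos]
    _ ≤ P.real {ω | θ ^ (γ / 2) < W ω} := by
        rw [div_le_iff₀ (exp_pos _)]
        linarith

theorem eventually_exp_le_tail (hW : Measurable W) (hWnn : ∀ ω, 0 ≤ W ω) (hγ : 0 < γ)
    (hκ : 0 < κ) (hmomint : ∀ k : ℕ, Integrable (fun ω => W ω ^ (2 * k)) P)
    (hL : (fun n : ℕ => log (∫ ω, W ω ^ (2 * n) ∂P) - logRate γ κ n) =o[atTop]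
      (fun n : ℕ => (n : ℝ)))
    {ε : ℝ} (hε : 0 < ε) :
    ∀ᶠ θ in atTop, exp ((-(γ * κ) - ε) * θ) ≤ P.real {ω | θ ^ (γ / 2) < W ω} := by
  have hδ : 0 < ε / (4 * γ) := by positivity
  have hν : 0 < κ + 2 * (ε / (4 * γ)) := by positivity
  filter_upwards [eventually_exp_logRate_le_tail hW hWnn hγ hκ hmomint hL
      (ν := κ + 2 * (ε / (4 * γ))) (lt_add_of_pos_right κ hδ) (by linarith) (half_pos hε),
    eventually_ge_atTop 0] with θ h hθ
  refine le_trans (exp_le_exp.2 (mul_le_mul_of_nonneg_right ?_ hθ)) h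
  have hrate := logRate_self_le hγ hν (x := κ + ε / (4 * γ)) (by positivity)
  rw [logRate_self γ hν.ne'] at hrate
  have : γ * (2 * (ε / (4 * γ))) = ε / 2 := by field_simp; ring
  linarith

end Tail

end

/-- From moment asymptotics to stretched-exponential tail asymptotics: if `W ≥ 0` has all
even moments finite with `log E[W^{2k}] = γ k log k + c k + o(k)`, then there is a
constant `c* ∈ (0, ∞)` with `log P(W > t) = -c* t^{2/γ} + o(t^{2/γ})` as `t → ∞`. -/
theorem tail_asymptotics_of_moment_asymptotics
    {Ω : Type*} [MeasurableSpace Ω] (P : Measure Ω) [IsProbabilityMeasure P]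
    (W : Ω → ℝ) (hW : Measurable W) (hWnn : ∀ ω, 0 ≤ W ω)
    (γ : ℝ) (hγ : 0 < γ) (c : ℝ)
    (hmomint : ∀ k : ℕ, Integrable (fun ω => (W ω) ^ (2 * k)) P)
    (hmom : (fun k : ℕ =>
        Real.log (∫ ω, (W ω) ^ (2 * k) ∂P) - (γ * k * Real.log k + c * k))
      =o[atTop] (fun k : ℕ => (k : ℝ))) :
    ∃ cstar : ℝ, 0 < cstar ∧
      (fun t : ℝ => Real.log (P {ω | t < W ω}).toReal + cstar * t ^ (2 / γ))
        =o[atTop] (fun t : ℝ => t ^ (2 / γ)) := by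
  have hL : (fun n : ℕ => Real.log (∫ ω, W ω ^ (2 * n) ∂P)
      - logRate γ (Real.exp (-(1 + c / γ))) n) =o[atTop] (fun n : ℕ => (n : ℝ)) := by
    simpa only [logRate_exp_neg_one_add_div hγ.ne'] using hmom
  set κ := Real.exp (-(1 + c / γ))
  have hκ : 0 < κ := Real.exp_pos _
  have hθ := isLittleO_log_add_mul_of_exp_bounds
    (fun ε hε => eventually_exp_le_tail hW hWnn hγ hκ hmomint hL hε)
    (fun ε hε => eventually_tail_le_exp hWnn hκ hmomint hL hε)
  refine ⟨γ * κ, by positivity,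
    (hθ.comp_tendsto (tendsto_rpow_atTop (by positivity))).congr' ?_ EventuallyEq.rfl⟩
  filter_upwards [eventually_gt_atTop 0] with t ht
  rw [Function.comp_apply, ← Real.rpow_mul ht.le, div_mul_div_comm, mul_comm 2 γ,
    div_self (by positivity), Real.rpow_one]
  rfl
end
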